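/- arXiv:2411.04104 — 2 statements merged into one kernel-verified Lean document; each statement's English description precedes it below -/
import Mathlib

section
/- Subadditivity of the Hilbert–Schmidt distance: for any N×N unitary matrices A and B, sqrt(1 - |Tr(AB)|²/N²) ≤ sqrt(1 - |Tr(A)|²/N²) + sqrt(1 - |Tr(B)|²/N²). -/
/-!
Vectorising matrices identifies `Tr (Xᴴ * Y)` with the inner product of `EuclideanSpace ℂ (n × n)`.
Then unitary matrices have norm `√N`, and `Tr (A * B) = ⟪Aᴴ, B⟫`, `Tr A = ⟪Aᴴ, 1⟫`,
`Tr B = ⟪1, B⟫`, so the claim is the triangle inequality for the sine of the angle between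
complex lines, applied through the line of the identity. For unit vectors `u, v, w`, splitting
`u` and `v` along `w` and its orthogonal complement gives
`|⟪u, v⟫| ≥ |⟪w, u⟫| |⟪w, v⟫| - sin θ(u, w) sin θ(w, v)`, i.e. `cos γ ≥ cos (α + β)`,
from which `sin γ ≤ sin α + sin β`.
-/

open Matrix WithLp
open scoped InnerProductSpace

lemma Real.sqrt_one_sub_sq_le_add_of_mul_sub_le {a b c : ℝ} (ha : 0 ≤ a) (ha₁ : a ≤ 1)
    (hb : 0 ≤ b) (hb₁ : b ≤ 1) (h : a * b - √(1 - a ^ 2) * √(1 - b ^ 2) ≤ c) :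
    √(1 - c ^ 2) ≤ √(1 - a ^ 2) + √(1 - b ^ 2) := by
  set sa := √(1 - a ^ 2)
  set sb := √(1 - b ^ 2)
  have hsa : sa ^ 2 = 1 - a ^ 2 := Real.sq_sqrt (by nlinarith)
  have hsb : sb ^ 2 = 1 - b ^ 2 := Real.sq_sqrt (by nlinarith)
  have hsa₀ : 0 ≤ sa := Real.sqrt_nonneg _
  have hsb₀ : 0 ≤ sb := Real.sqrt_nonneg _
  refine Real.sqrt_le_iff.mpr ⟨by positivity, ?_⟩
  rcases le_or_gt (a * b) (sa * sb) with hab | hab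
  · nlinarith [sq_nonneg c]
  · have hc : (a * b - sa * sb) ^ 2 ≤ c ^ 2 := pow_le_pow_left₀ (by linarith) h 2
    have hsin : 1 - (a * b - sa * sb) ^ 2 = (sa * b + a * sb) ^ 2 := by
      linear_combination (-(b ^ 2) - sb ^ 2) * hsa - hsb
    have hle : sa * b + a * sb ≤ sa + sb := by nlinarith
    nlinarith [pow_le_pow_left₀ (by positivity) hle 2]

section InnerProductSpace

variable {𝕜 E : Type*} [RCLike 𝕜] [NormedAddCommGroup E] [InnerProductSpace 𝕜 E]

lemma norm_sub_inner_smul_sq {w : E} (hw : ‖w‖ = 1) (u : E) :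
    ‖u - ⟪w, u⟫_𝕜 • w‖ ^ 2 = ‖u‖ ^ 2 - ‖⟪w, u⟫_𝕜‖ ^ 2 := by
  rw [@norm_sub_sq 𝕜, norm_smul, inner_smul_right, hw, ← inner_conj_symm u w, RCLike.mul_conj]
  norm_cast
  ring

lemma inner_eq_conj_mul_add_inner_sub_inner_smul {w : E} (hw : ‖w‖ = 1) (u v : E) :
    ⟪u, v⟫_𝕜 = starRingEnd 𝕜 ⟪w, u⟫_𝕜 * ⟪w, v⟫_𝕜 + ⟪u - ⟪w, u⟫_𝕜 • w, v - ⟪w, v⟫_𝕜 • w⟫_𝕜 := by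
  simp only [inner_sub_left, inner_sub_right, inner_smul_left, inner_smul_right,
    inner_self_eq_norm_sq_to_K, hw, ← inner_conj_symm u w]
  push_cast
  ring

lemma norm_inner_mul_norm_inner_sub_le_norm_inner {w : E} (hw : ‖w‖ = 1) (u v : E) :
    ‖⟪w, u⟫_𝕜‖ * ‖⟪w, v⟫_𝕜‖ - √(‖u‖ ^ 2 - ‖⟪w, u⟫_𝕜‖ ^ 2) * √(‖v‖ ^ 2 - ‖⟪w, v⟫_𝕜‖ ^ 2) ≤
      ‖⟪u, v⟫_𝕜‖ := by
  set u' := u - ⟪w, u⟫_𝕜 • w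
  set v' := v - ⟪w, v⟫_𝕜 • w
  rw [← norm_sub_inner_smul_sq hw u, ← norm_sub_inner_smul_sq hw v,
    Real.sqrt_sq (norm_nonneg _), Real.sqrt_sq (norm_nonneg _),
    inner_eq_conj_mul_add_inner_sub_inner_smul hw u v]
  calc _ = ‖starRingEnd 𝕜 ⟪w, u⟫_𝕜 * ⟪w, v⟫_𝕜‖ - ‖u'‖ * ‖v'‖ := by
        rw [norm_mul, RCLike.norm_conj]
    _ ≤ ‖starRingEnd 𝕜 ⟪w, u⟫_𝕜 * ⟪w, v⟫_𝕜‖ - ‖⟪u', v'⟫_𝕜‖ := by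
        gcongr; exact norm_inner_le_norm _ _
    _ ≤ _ := norm_sub_le_norm_add _ _

lemma sqrt_one_sub_norm_inner_sq_le_add {u v w : E} (hu : ‖u‖ = 1) (hv : ‖v‖ = 1)
    (hw : ‖w‖ = 1) :
    √(1 - ‖⟪u, v⟫_𝕜‖ ^ 2) ≤ √(1 - ‖⟪u, w⟫_𝕜‖ ^ 2) + √(1 - ‖⟪w, v⟫_𝕜‖ ^ 2) := by
  have norm_inner_le_one {x : E} (hx : ‖x‖ = 1) : ‖⟪w, x⟫_𝕜‖ ≤ 1 := by
    simpa [hw, hx] using norm_inner_le_norm (𝕜 := 𝕜) w x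
  rw [norm_inner_symm u w]
  refine Real.sqrt_one_sub_sq_le_add_of_mul_sub_le (norm_nonneg _) (norm_inner_le_one hu)
    (norm_nonneg _) (norm_inner_le_one hv) ?_
  simpa [hu, hv] using norm_inner_mul_norm_inner_sub_le_norm_inner hw u v

lemma norm_inner_sq_div_eq_norm_inner_smul_inv_norm_sq (u v : E) :
    ‖⟪u, v⟫_𝕜‖ ^ 2 / (‖u‖ ^ 2 * ‖v‖ ^ 2) =
      ‖⟪(‖u‖⁻¹ : 𝕜) • u, (‖v‖⁻¹ : 𝕜) • v⟫_𝕜‖ ^ 2 := by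
  rw [inner_smul_left, inner_smul_right, norm_mul, norm_mul, RCLike.norm_conj]
  simp only [norm_inv, RCLike.norm_ofReal, abs_norm]
  field_simp

lemma sqrt_one_sub_norm_inner_sq_div_le_add (u v w : E) :
    √(1 - ‖⟪u, v⟫_𝕜‖ ^ 2 / (‖u‖ ^ 2 * ‖v‖ ^ 2)) ≤
      √(1 - ‖⟪u, w⟫_𝕜‖ ^ 2 / (‖u‖ ^ 2 * ‖w‖ ^ 2)) +
        √(1 - ‖⟪w, v⟫_𝕜‖ ^ 2 / (‖w‖ ^ 2 * ‖v‖ ^ 2)) := by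
  rcases eq_or_ne u 0 with rfl | hu
  · simp
  rcases eq_or_ne v 0 with rfl | hv
  · simp
  rcases eq_or_ne w 0 with rfl | hw
  · calc _ ≤ (1 : ℝ) := Real.sqrt_le_one.mpr (by simp only [sub_le_self_iff]; positivity)
      _ ≤ _ := by norm_num
  simp only [norm_inner_sq_div_eq_norm_inner_smul_inv_norm_sq]
  exact sqrt_one_sub_norm_inner_sq_le_add (norm_smul_inv_norm hu) (norm_smul_inv_norm hv)
    (norm_smul_inv_norm hw)

end InnerProductSpace

lemma Matrix.inner_toLp_vec {m n 𝕜 : Type*} [Fintype m] [Fintype n] [RCLike 𝕜]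
    (X Y : Matrix m n 𝕜) :
    ⟪toLp 2 (vec X), toLp 2 (vec Y)⟫_𝕜 = (Xᴴ * Y).trace := by
  rw [EuclideanSpace.inner_toLp_toLp, dotProduct_comm, star_vec_dotProduct_vec]

lemma Matrix.norm_toLp_vec_sq_of_mem_unitaryGroup {n 𝕜 : Type*} [Fintype n] [DecidableEq n]
    [RCLike 𝕜] {U : Matrix n n 𝕜} (hU : U ∈ unitaryGroup n 𝕜) :
    ‖toLp 2 (vec U)‖ ^ 2 = Fintype.card n := by
  rw [@norm_sq_eq_re_inner 𝕜, inner_toLp_vec, ← star_eq_conjTranspose,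
    (mem_unitaryGroup_iff').mp hU, trace_one]
  simp

theorem hs_subadditive (N : ℕ) (A B : Matrix (Fin N) (Fin N) ℂ)
    (hA : A ∈ Matrix.unitaryGroup (Fin N) ℂ)
    (hB : B ∈ Matrix.unitaryGroup (Fin N) ℂ) :
    Real.sqrt (1 - ‖(A * B).trace‖ ^ 2 / (N : ℝ) ^ 2) ≤
      Real.sqrt (1 - ‖A.trace‖ ^ 2 / (N : ℝ) ^ 2) +
      Real.sqrt (1 - ‖B.trace‖ ^ 2 / (N : ℝ) ^ 2) := by
  have hAH : Aᴴ ∈ unitaryGroup (Fin N) ℂ := Unitary.star_mem hA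
  have h := sqrt_one_sub_norm_inner_sq_div_le_add (𝕜 := ℂ) (toLp 2 (vec Aᴴ)) (toLp 2 (vec B))
    (toLp 2 (vec (1 : Matrix (Fin N) (Fin N) ℂ)))
  simp only [inner_toLp_vec, conjTranspose_conjTranspose, conjTranspose_one, mul_one, one_mul,
    norm_toLp_vec_sq_of_mem_unitaryGroup hAH, norm_toLp_vec_sq_of_mem_unitaryGroup hB,
    norm_toLp_vec_sq_of_mem_unitaryGroup (one_mem _), Fintype.card_fin] at h
  simpa only [sq] using h
end

section
/- The Hilbert–Schmidt distance defines a metric on the set of N×N unitary matrices modulo global phase: it is nonnegative, symmetric, satisfies the triangle inequality, and vanishes exactly on pairs that are equal up to a unit scalar. -/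
/-!
For unit vectors `u`, `v` of an inner product space, `√(1 - ‖⟪u, v⟫‖²)` is the distance from `u`
to the line through `v`, attained at the orthogonal projection `⟪v, u⟫ • v`. Approximating `u` by
a multiple of `v` and then `v` by a multiple of `w` gives a multiple of `w` at distance at most
the sum of the two distances, whence the triangle inequality; the distance vanishes exactly when
`u` lies on that line. Vectorising `U ↦ U / √N` makes unitaries unit vectors with
`⟪U, V⟫ = Tr(Uᴴ V) / N`, so `hsDist` is this distance.
-/

open scoped Matrix

noncomputable def hsDist {N : ℕ} (U V : Matrix (Fin N) (Fin N) ℂ) : ℝ :=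
  Real.sqrt (1 - ‖(Uᴴ * V).trace‖ ^ 2 / (N : ℝ) ^ 2)

open scoped InnerProductSpace

section sinDist

variable (𝕜 : Type*) {E : Type*} [RCLike 𝕜] [NormedAddCommGroup E] [InnerProductSpace 𝕜 E]

noncomputable def sinDist (u v : E) : ℝ := √(1 - ‖⟪u, v⟫_𝕜‖ ^ 2)

variable {𝕜}

theorem norm_sub_smul_sq {v : E} (hv : ‖v‖ = 1) (u : E) (a : 𝕜) :
    ‖u - a • v‖ ^ 2 = ‖u - ⟪v, u⟫_𝕜 • v‖ ^ 2 + ‖⟪v, u⟫_𝕜 - a‖ ^ 2 := by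
  have horth : ⟪u - ⟪v, u⟫_𝕜 • v, (⟪v, u⟫_𝕜 - a) • v⟫_𝕜 = 0 := by
    rw [inner_smul_right, inner_sub_left, inner_smul_left, inner_self_eq_norm_sq_to_K, hv,
      inner_conj_symm]
    simp
  have hsplit : u - ⟪v, u⟫_𝕜 • v + (⟪v, u⟫_𝕜 - a) • v = u - a • v := by module
  have := norm_add_sq_eq_norm_sq_add_norm_sq_of_inner_eq_zero _ _ horth
  rwa [hsplit, norm_smul, hv, mul_one, ← sq, ← sq, ← sq] at this

theorem norm_sub_inner_smul_le {v : E} (hv : ‖v‖ = 1) (u : E) (a : 𝕜) :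
    ‖u - ⟪v, u⟫_𝕜 • v‖ ≤ ‖u - a • v‖ := by
  refine (pow_le_pow_iff_left₀ (norm_nonneg _) (norm_nonneg _) two_ne_zero).1 ?_
  rw [norm_sub_smul_sq hv u a]
  exact le_add_of_nonneg_right (by positivity)

theorem norm_sub_inner_smul_eq_sinDist {u v : E} (hu : ‖u‖ = 1) (hv : ‖v‖ = 1) :
    ‖u - ⟪v, u⟫_𝕜 • v‖ = sinDist 𝕜 u v := by
  have h := norm_sub_smul_sq hv u (0 : 𝕜)
  rw [zero_smul, sub_zero, sub_zero, hu, norm_inner_symm] at h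
  rw [sinDist, ← Real.sqrt_sq (norm_nonneg (u - _))]
  congr 1
  linarith

theorem sinDist_comm (u v : E) : sinDist 𝕜 u v = sinDist 𝕜 v u := by
  rw [sinDist, sinDist, norm_inner_symm]

theorem sinDist_triangle {u v w : E} (hu : ‖u‖ = 1) (hv : ‖v‖ = 1) (hw : ‖w‖ = 1) :
    sinDist 𝕜 u w ≤ sinDist 𝕜 u v + sinDist 𝕜 v w := by
  set a := ⟪v, u⟫_𝕜
  set b := ⟪w, v⟫_𝕜
  have ha : ‖a‖ ≤ 1 := by simpa [hu, hv] using norm_inner_le_norm (𝕜 := 𝕜) v u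
  calc sinDist 𝕜 u w = ‖u - ⟪w, u⟫_𝕜 • w‖ := (norm_sub_inner_smul_eq_sinDist hu hw).symm
    _ ≤ ‖u - (a * b) • w‖ := norm_sub_inner_smul_le hw u _
    _ ≤ ‖u - a • v‖ + ‖a • v - (a * b) • w‖ := norm_sub_le_norm_sub_add_norm_sub _ _ _
    _ = ‖u - a • v‖ + ‖a‖ * ‖v - b • w‖ := by rw [mul_smul, ← smul_sub, norm_smul]
    _ ≤ ‖u - a • v‖ + ‖v - b • w‖ := by gcongr; exact mul_le_of_le_one_left (norm_nonneg _) ha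
    _ = sinDist 𝕜 u v + sinDist 𝕜 v w := by
      rw [norm_sub_inner_smul_eq_sinDist hu hv, norm_sub_inner_smul_eq_sinDist hv hw]

theorem sinDist_eq_zero_iff {u v : E} (hu : ‖u‖ = 1) (hv : ‖v‖ = 1) :
    sinDist 𝕜 u v = 0 ↔ ∃ c : 𝕜, ‖c‖ = 1 ∧ v = c • u := by
  constructor
  · intro h
    have hvu : v = ⟪u, v⟫_𝕜 • u := by
      rw [← sub_eq_zero, ← norm_eq_zero, norm_sub_inner_smul_eq_sinDist hv hu, sinDist_comm, h]
    refine ⟨⟪u, v⟫_𝕜, ?_, hvu⟩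
    simpa [hu, hv, norm_smul, eq_comm] using congrArg norm hvu
  · rintro ⟨c, hc, rfl⟩
    simp [sinDist, inner_smul_right, inner_self_eq_norm_sq_to_K, hu, hc]

end sinDist

namespace Matrix

variable {n : Type*} [Fintype n]

noncomputable def normalizedVec (U : Matrix n n ℂ) : EuclideanSpace ℂ (n × n) :=
  ((√(Fintype.card n) : ℝ) : ℂ)⁻¹ • WithLp.toLp 2 U.vec

theorem inner_normalizedVec (U V : Matrix n n ℂ) :
    ⟪U.normalizedVec, V.normalizedVec⟫_ℂ = (Uᴴ * V).trace / Fintype.card n := by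
  rw [normalizedVec, normalizedVec, inner_smul_left, inner_smul_right,
    EuclideanSpace.inner_toLp_toLp, dotProduct_comm, star_vec_dotProduct_vec, map_inv₀,
    Complex.conj_ofReal, ← mul_assoc, ← mul_inv, ← Complex.ofReal_mul,
    Real.mul_self_sqrt (Nat.cast_nonneg _), div_eq_inv_mul, Complex.ofReal_natCast]

theorem normalizedVec_smul (c : ℂ) (U : Matrix n n ℂ) :
    (c • U).normalizedVec = c • U.normalizedVec := by
  rw [normalizedVec, normalizedVec, vec_smul, WithLp.toLp_smul, smul_comm]

theorem normalizedVec_injective [Nonempty n] :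
    Function.Injective (normalizedVec : Matrix n n ℂ → _) := by
  have hc : ((√(Fintype.card n) : ℝ) : ℂ)⁻¹ ≠ 0 := by simp [Fintype.card_ne_zero]
  intro U V h
  exact vec_inj.1 (WithLp.toLp_injective 2 (smul_right_injective _ hc h))

theorem norm_normalizedVec [DecidableEq n] [Nonempty n] {U : Matrix n n ℂ}
    (hU : U ∈ unitaryGroup n ℂ) : ‖U.normalizedVec‖ = 1 := by
  have hUU : Uᴴ * U = 1 := by simpa [star_eq_conjTranspose] using hU.1
  have h := @norm_sq_eq_re_inner ℂ _ _ _ _ U.normalizedVec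
  rw [inner_normalizedVec, hUU, trace_one, div_self (by simp [Fintype.card_ne_zero]),
    RCLike.one_re] at h
  exact (pow_eq_one_iff_of_nonneg (norm_nonneg _) two_ne_zero).1 h

end Matrix

theorem hsDist_eq_sinDist {N : ℕ} (U V : Matrix (Fin N) (Fin N) ℂ) :
    hsDist U V = sinDist ℂ U.normalizedVec V.normalizedVec := by
  rw [hsDist, sinDist, Matrix.inner_normalizedVec, norm_div, div_pow, Complex.norm_natCast,
    Fintype.card_fin]

theorem hsDist_metric_mod_phase (N : ℕ) (hN : 1 ≤ N) :
    (∀ U V : Matrix (Fin N) (Fin N) ℂ,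
        U ∈ Matrix.unitaryGroup (Fin N) ℂ → V ∈ Matrix.unitaryGroup (Fin N) ℂ →
        0 ≤ hsDist U V) ∧
    (∀ U V : Matrix (Fin N) (Fin N) ℂ,
        U ∈ Matrix.unitaryGroup (Fin N) ℂ → V ∈ Matrix.unitaryGroup (Fin N) ℂ →
        hsDist U V = hsDist V U) ∧
    (∀ U V W : Matrix (Fin N) (Fin N) ℂ,
        U ∈ Matrix.unitaryGroup (Fin N) ℂ → V ∈ Matrix.unitaryGroup (Fin N) ℂ →
        W ∈ Matrix.unitaryGroup (Fin N) ℂ →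
        hsDist U W ≤ hsDist U V + hsDist V W) ∧
    (∀ U V : Matrix (Fin N) (Fin N) ℂ,
        U ∈ Matrix.unitaryGroup (Fin N) ℂ → V ∈ Matrix.unitaryGroup (Fin N) ℂ →
        (hsDist U V = 0 ↔ ∃ c : ℂ, ‖c‖ = 1 ∧ V = c • U)) := by
  have : Nonempty (Fin N) := ⟨⟨0, hN⟩⟩
  refine ⟨fun U V _ _ => Real.sqrt_nonneg _, fun U V _ _ => ?_, fun U V W hU hV hW => ?_,
    fun U V hU hV => ?_⟩
  · rw [hsDist_eq_sinDist, hsDist_eq_sinDist, sinDist_comm]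
  · simp only [hsDist_eq_sinDist]
    exact sinDist_triangle (Matrix.norm_normalizedVec hU) (Matrix.norm_normalizedVec hV)
      (Matrix.norm_normalizedVec hW)
  · rw [hsDist_eq_sinDist,
      sinDist_eq_zero_iff (Matrix.norm_normalizedVec hU) (Matrix.norm_normalizedVec hV)]
    simp only [← Matrix.normalizedVec_smul, Matrix.normalizedVec_injective.eq_iff]
end
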